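/- arXiv:1505.08121 — 4 statements merged into one kernel-verified Lean document; each statement's English description precedes it below -/
import Mathlib

section
/- For every integer m ≥ 3, the lexicographic product C_m[4] (equivalently, the Cayley graph on (Z_2 × Z_2) × Z_m with connection set (Z_2 × Z_2) × {1, −1}) admits a 2-factorization into four C_4-factors, i.e., four spanning subgraphs each of which is a vertex-disjoint union of m cycles of length 4. -/
open SimpleGraph

/-- `F` is a decomposition of the graph `G` into edge-disjoint subgraphs. -/
def IsDecompositionF {V : Type*} {n : ℕ} (G : SimpleGraph V) (F : Fin n → SimpleGraph V) : Prop :=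
  (∀ i, F i ≤ G) ∧ (∀ i j, i ≠ j → F i ⊓ F j = ⊥) ∧ (⨆ i, F i) = G

/-- `H` is a `C_k`-factor of `G`: a spanning 2-regular subgraph all of whose
connected components have `k` vertices (hence are `k`-cycles). -/
def IsCnFactor {V : Type*} (G H : SimpleGraph V) (k : ℕ) : Prop :=
  H ≤ G ∧ (∀ v, (H.neighborSet v).ncard = 2) ∧
    ∀ v, (H.connectedComponentMk v).supp.ncard = k

/-- `H` is a perfect matching (1-factor) of `G`. -/
def IsPM {V : Type*} (G H : SimpleGraph V) : Prop :=
  H ≤ G ∧ ∀ v, (H.neighborSet v).ncard = 1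

/-- The lexicographic blow-up `C_m[4]`: the Cayley graph on `ZMod 4 × ZMod m`
with connection set `ZMod 4 × {1, -1}`. -/
def Cm4 (m : ℕ) : SimpleGraph (ZMod 4 × ZMod m) :=
  SimpleGraph.fromRel (fun u v => v.2 - u.2 = 1)

/-- The blow-up `G[k]`: replace every vertex by `k` independent vertices. -/
def blowup {V : Type*} (G : SimpleGraph V) (k : ℕ) : SimpleGraph (V × Fin k) where
  Adj u v := G.Adj u.1 v.1
  symm := ⟨fun _ _ h => G.adj_symm h⟩
  loopless := ⟨fun u h => G.irrefl h⟩

/-! The four factors are built column by column. Split the four rows into two halves; a factor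
is described by a map `c : ZMod m → Bool` saying which half of column `x` is joined, by a
`K_{2,2}`, to the half `!c (x + 1)` of column `x + 1`; whatever `c` is, every vertex lies in
exactly one such `K_{2,2} = C_4`. Four such maps partition the edges of `C_m[4]` exactly when,
for every `x`, the pairs `(c i x, c i (x + 1))` run through `Bool × Bool`. Such maps come from a
proper 3-coloring of the cycle `C_m` together with the three nontrivial characters of the Klein
group `V_4 ≅ Fin 4`, any two of which separate its elements. -/

open Function

def upperHalf (a : ZMod 4) : Bool := decide (2 ≤ a.val)

lemma ncard_upperHalf_fiber (q : Bool) : {a : ZMod 4 | upperHalf a = q}.ncard = 2 := by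
  rw [Set.ncard_eq_toFinset_card']
  revert q
  decide

def kleinCharacter : Fin 3 → Fin 4 → Bool
  | 0 => fun i => decide (2 ≤ i.val)
  | 1 => fun i => decide (i.val % 2 = 1)
  | 2 => fun i => xor (decide (2 ≤ i.val)) (decide (i.val % 2 = 1))

lemma bijective_kleinCharacter_pair {s t : Fin 3} (h : s ≠ t) :
    Bijective fun i => (kleinCharacter s i, kleinCharacter t i) := by
  revert s t
  decide

lemma exists_three_coloring_zmod {m : ℕ} (hm : 2 ≤ m) :
    ∃ κ : ZMod m → Fin 3, ∀ x, κ (x + 1) ≠ κ x := by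
  obtain ⟨k, rfl⟩ : ∃ k, m = k + 2 := ⟨m - 2, by omega⟩
  let κ := cycleGraph.tricoloring (k + 2) hm
  exact ⟨κ, fun x : Fin (k + 2) => κ.valid (cycleGraph_adj.mpr (.inl (add_sub_cancel_left x 1)))⟩

lemma SimpleGraph.connectedComponentMk_supp_eq_of_closed {V : Type*} {G : SimpleGraph V}
    {S : Set V} {v : V} (hclosed : ∀ w ∈ S, ∀ z, G.Adj w z → z ∈ S) (hv : v ∈ S)
    (hreach : ∀ w ∈ S, G.Reachable v w) : (G.connectedComponentMk v).supp = S := by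
  have walk_closed {a b : V} (p : G.Walk a b) : a ∈ S → b ∈ S := by
    induction p with
    | nil => exact id
    | cons h _ ih => exact fun ha => ih (hclosed _ ha _ h)
  ext w
  rw [ConnectedComponent.mem_supp_iff, ConnectedComponent.eq]
  exact ⟨fun h => walk_closed h.symm.some hv, fun hw => (hreach w hw).symm⟩

section BlockFactor

variable {m : ℕ}

def halfColumn (y : ZMod m) (q : Bool) : Set (ZMod 4 × ZMod m) :=
  {v | v.2 = y ∧ upperHalf v.1 = q}

lemma ncard_halfColumn (y : ZMod m) (q : Bool) : (halfColumn y q).ncard = 2 := by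
  have himage : halfColumn y q = (fun a => (a, y)) '' {a | upperHalf a = q} := by
    ext ⟨a, z⟩
    simp only [halfColumn, Set.mem_ofPred_eq, Set.mem_image, Prod.mk.injEq]
    constructor
    · rintro ⟨rfl, ha⟩
      exact ⟨a, ha, rfl, rfl⟩
    · rintro ⟨a, ha, rfl, rfl⟩
      exact ⟨rfl, ha⟩
  rw [himage, Set.ncard_image_of_injective _ (fun _ _ h => congrArg Prod.fst h),
    ncard_upperHalf_fiber]

lemma halfColumn_nonempty (y : ZMod m) (q : Bool) : (halfColumn y q).Nonempty :=
  Set.nonempty_of_ncard_ne_zero (by rw [ncard_halfColumn]; decide)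

lemma halfColumn_finite (y : ZMod m) (q : Bool) : (halfColumn y q).Finite :=
  Set.finite_of_ncard_ne_zero (by rw [ncard_halfColumn]; decide)

def blockRel (c : ZMod m → Bool) (u v : ZMod 4 × ZMod m) : Prop :=
  v.2 = u.2 + 1 ∧ upperHalf u.1 = c u.2 ∧ upperHalf v.1 = !c v.2

def blockFactor (c : ZMod m → Bool) : SimpleGraph (ZMod 4 × ZMod m) :=
  fromRel (blockRel c)

lemma blockFactor_le_cm4 (c : ZMod m → Bool) : blockFactor c ≤ Cm4 m := by
  intro u v huv
  rw [blockFactor, fromRel_adj] at huv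
  rw [Cm4, fromRel_adj]
  refine ⟨huv.1, huv.2.imp (fun h => ?_) (fun h => ?_)⟩ <;> simp [h.1]

lemma blockRel_iff {c : ZMod m → Bool} {u v : ZMod 4 × ZMod m} :
    blockRel c u v ↔ v.2 = u.2 + 1 ∧ (c u.2, c (u.2 + 1)) = (upperHalf u.1, !upperHalf v.1) := by
  constructor
  · rintro ⟨hv, hu, hv'⟩
    rw [← hv, hv', hu, Bool.not_not]
    exact ⟨rfl, rfl⟩
  · rintro ⟨hv, hc⟩
    simp only [Prod.mk.injEq] at hc
    rw [blockRel, hv, hc.1, hc.2, Bool.not_not]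
    exact ⟨rfl, rfl, rfl⟩

section Decomposition

variable {n : ℕ} {c : Fin n → ZMod m → Bool} (hc : ∀ x, Bijective fun i => (c i x, c i (x + 1)))
include hc

lemma eq_of_blockRel {i j : Fin n} {u v : ZMod 4 × ZMod m} (hi : blockRel (c i) u v)
    (hj : blockRel (c j) u v) : i = j :=
  (hc u.2).injective ((blockRel_iff.mp hi).2.trans (blockRel_iff.mp hj).2.symm)

lemma exists_blockRel {u v : ZMod 4 × ZMod m} (huv : v.2 = u.2 + 1) : ∃ i, blockRel (c i) u v :=
  let ⟨i, hi⟩ := (hc u.2).surjective (upperHalf u.1, !upperHalf v.1)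
  ⟨i, blockRel_iff.mpr ⟨huv, hi⟩⟩

lemma isDecompositionF_blockFactor (h2 : (2 : ZMod m) ≠ 0) :
    IsDecompositionF (Cm4 m) fun i => blockFactor (c i) := by
  have not_both {u v : ZMod 4 × ZMod m} (huv : v.2 = u.2 + 1) (hvu : u.2 = v.2 + 1) : False :=
    h2 (by linear_combination -(hvu + huv))
  refine ⟨fun i => blockFactor_le_cm4 _, fun i j hij => ?_, ?_⟩
  · ext u v
    simp only [inf_adj, bot_adj, iff_false, blockFactor, fromRel_adj]
    rintro ⟨⟨-, hi | hi⟩, -, hj | hj⟩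
    · exact hij (eq_of_blockRel hc hi hj)
    · exact not_both hi.1 hj.1
    · exact not_both hj.1 hi.1
    · exact hij (eq_of_blockRel hc hi hj)
  · ext u v
    rw [iSup_adj]
    refine ⟨fun ⟨i, h⟩ => blockFactor_le_cm4 _ h, fun h => ?_⟩
    rw [Cm4, fromRel_adj] at h
    obtain ⟨hne, huv | hvu⟩ := h
    · obtain ⟨i, hi⟩ := exists_blockRel hc (eq_add_of_sub_eq' huv)
      exact ⟨i, hne, .inl hi⟩
    · obtain ⟨i, hi⟩ := exists_blockRel hc (eq_add_of_sub_eq' hvu)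
      exact ⟨i, hne, .inr hi⟩

end Decomposition

variable [Nontrivial (ZMod m)] {c : ZMod m → Bool} {a : ZMod 4} {x : ZMod m}

lemma neighborSet_blockFactor_of_eq (h : upperHalf a = c x) :
    (blockFactor c).neighborSet (a, x) = halfColumn (x + 1) (!c (x + 1)) := by
  ext ⟨b, y⟩
  simp only [mem_neighborSet, blockFactor, fromRel_adj, blockRel, halfColumn, Set.mem_ofPred_eq]
  constructor
  · rintro ⟨-, ⟨rfl, -, hb⟩ | ⟨-, -, ha⟩⟩
    · exact ⟨rfl, hb⟩
    · exact absurd (h.symm.trans ha) (Bool.not_ne_self _).symm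
  · rintro ⟨rfl, hb⟩
    exact ⟨fun he => by simpa using congrArg Prod.snd he, .inl ⟨rfl, h, hb⟩⟩

lemma neighborSet_blockFactor_of_eq_not (h : upperHalf a = !c x) :
    (blockFactor c).neighborSet (a, x) = halfColumn (x - 1) (c (x - 1)) := by
  ext ⟨b, y⟩
  simp only [mem_neighborSet, blockFactor, fromRel_adj, blockRel, halfColumn, Set.mem_ofPred_eq]
  constructor
  · rintro ⟨-, ⟨-, ha, -⟩ | ⟨hx, hb, -⟩⟩
    · exact absurd (ha.symm.trans h) (Bool.not_ne_self _).symm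
    · obtain rfl : y = x - 1 := eq_sub_of_add_eq hx.symm
      exact ⟨rfl, hb⟩
  · rintro ⟨rfl, hb⟩
    exact ⟨fun he => one_ne_zero (sub_eq_self.mp (congrArg Prod.snd he).symm),
      .inr ⟨by simp, hb, h⟩⟩

lemma ncard_neighborSet_blockFactor (v : ZMod 4 × ZMod m) :
    ((blockFactor c).neighborSet v).ncard = 2 := by
  obtain ⟨a, x⟩ := v
  by_cases h : upperHalf a = c x
  · rw [neighborSet_blockFactor_of_eq h, ncard_halfColumn]
  · rw [neighborSet_blockFactor_of_eq_not (Bool.eq_not_of_ne h), ncard_halfColumn]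

lemma supp_blockFactor_of_eq (h : upperHalf a = c x) :
    ((blockFactor c).connectedComponentMk (a, x)).supp =
      halfColumn x (c x) ∪ halfColumn (x + 1) (!c (x + 1)) := by
  have adj_right {b : ZMod 4} (hb : upperHalf b = c x) {z : ZMod 4 × ZMod m}
      (hz : z ∈ halfColumn (x + 1) (!c (x + 1))) : (blockFactor c).Adj (b, x) z := by
    rwa [← mem_neighborSet, neighborSet_blockFactor_of_eq hb]
  refine connectedComponentMk_supp_eq_of_closed ?_ (.inl ⟨rfl, h⟩) ?_
  · rintro ⟨b, y⟩ (⟨rfl, hb⟩ | ⟨rfl, hb⟩) z hz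
    · rw [← mem_neighborSet, neighborSet_blockFactor_of_eq hb] at hz
      exact .inr hz
    · rw [← mem_neighborSet, neighborSet_blockFactor_of_eq_not hb, add_sub_cancel_right] at hz
      exact .inl hz
  · rintro ⟨b, y⟩ (⟨rfl, hb⟩ | hw)
    · obtain ⟨z, hz⟩ := halfColumn_nonempty (y + 1) (!c (y + 1))
      exact (adj_right h hz).reachable.trans (adj_right hb hz).reachable.symm
    · exact (adj_right h hw).reachable

lemma ncard_supp_blockFactor_of_eq (h : upperHalf a = c x) :
    ((blockFactor c).connectedComponentMk (a, x)).supp.ncard = 4 := by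
  have hdisj : Disjoint (halfColumn x (c x)) (halfColumn (x + 1) (!c (x + 1))) :=
    Set.disjoint_left.mpr fun _ hl hr => one_ne_zero (left_eq_add.mp (hl.1.symm.trans hr.1))
  rw [supp_blockFactor_of_eq h,
    Set.ncard_union_eq hdisj (halfColumn_finite _ _) (halfColumn_finite _ _),
    ncard_halfColumn, ncard_halfColumn]

lemma ncard_supp_blockFactor (v : ZMod 4 × ZMod m) :
    ((blockFactor c).connectedComponentMk v).supp.ncard = 4 := by
  obtain ⟨a, x⟩ := v
  by_cases h : upperHalf a = c x
  · exact ncard_supp_blockFactor_of_eq h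
  obtain ⟨⟨b, y⟩, rfl, hb⟩ := halfColumn_nonempty (x - 1) (c (x - 1))
  have hadj : (blockFactor c).Adj (a, x) (b, x - 1) := by
    rw [← mem_neighborSet, neighborSet_blockFactor_of_eq_not (Bool.eq_not_of_ne h)]
    exact ⟨rfl, hb⟩
  rw [ConnectedComponent.sound hadj.reachable]
  exact ncard_supp_blockFactor_of_eq hb

lemma isCnFactor_blockFactor (c : ZMod m → Bool) : IsCnFactor (Cm4 m) (blockFactor c) 4 :=
  ⟨blockFactor_le_cm4 c, ncard_neighborSet_blockFactor, ncard_supp_blockFactor⟩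

end BlockFactor

/-- For every `m ≥ 3`, `C_m[4]` has a 2-factorization into four `C_4`-factors. -/
theorem stmt_1 (m : ℕ) (hm : 3 ≤ m) :
    ∃ F : Fin 4 → SimpleGraph (ZMod 4 × ZMod m),
      IsDecompositionF (Cm4 m) F ∧ ∀ i, IsCnFactor (Cm4 m) (F i) 4 := by
  have : Fact (1 < m) := ⟨by omega⟩
  have h2 : (2 : ZMod m) ≠ 0 := fun h =>
    absurd (Nat.le_of_dvd two_pos ((ZMod.natCast_eq_zero_iff 2 m).mp (by exact_mod_cast h)))
      (by omega)
  obtain ⟨κ, hκ⟩ := exists_three_coloring_zmod (by omega : 2 ≤ m)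
  let c (i : Fin 4) (x : ZMod m) : Bool := kleinCharacter (κ x) i
  have hc (x : ZMod m) : Bijective fun i => (c i x, c i (x + 1)) :=
    bijective_kleinCharacter_pair (hκ x).symm
  exact ⟨fun i => blockFactor (c i), isDecompositionF_blockFactor hc h2,
    fun i => isCnFactor_blockFactor (c i)⟩
end

section
/- For every integer m ≥ 3, the lexicographic product C_m[4] admits a 2-factorization into exactly two C_4-factors and two C_m-factors. -/
open SimpleGraph

/-!
Write `(a, i)` as vertex `a` of layer `i`, so that consecutive layers span a `K_{4,4}`. Each
factor is built layer by layer: its edges from layer `i` to layer `i + 1` are read off a table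
at the label of layer `i`. Layers are labelled by the parity of their index, except that for odd
`m` the last two layers carry a gadget that repairs the parity. Between ordinary layers the
`C_4`-factors are the squares `{2, 3} × {0, 1}` and `{0, 1} × {2, 3}`, and the `C_m`-factors are
the matchings `id ⊕ (2 3)` and `(0 1) ⊕ id` of the two remaining `K_{2,2}`'s.

Every requirement then reduces to a finite check on the tables along consecutive labels. Degrees
and edge-disjointness only involve two consecutive labels. In a 2-regular graph a vertex on a
4-cycle has exactly four vertices in its component, and a 4-cycle spans at most three layers, so
it is seen in a window of five layers. A `C_m`-factor whose matchings carry the cycles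
("strands") coherently from label to label has these strands, each meeting every layer once,
as its components.
-/

section TwoRegular

variable {V : Type*} {G : SimpleGraph V}

theorem SimpleGraph.supp_connectedComponentMk_eq {S : Set V} {v : V} (hv : v ∈ S)
    (hclosed : ∀ x ∈ S, ∀ y, G.Adj x y → y ∈ S) (hreach : ∀ y ∈ S, G.Reachable v y) :
    (G.connectedComponentMk v).supp = S := by
  have walk_mem : ∀ {x y : V} (p : G.Walk x y), x ∈ S → y ∈ S := by
    intro x y p
    induction p with
    | nil => exact id
    | cons h _ ih => exact fun hx => ih (hclosed _ hx _ h)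
  ext y
  rw [ConnectedComponent.mem_supp_iff, ConnectedComponent.eq]
  exact ⟨fun ⟨p⟩ => walk_mem p.reverse hv, fun hy => (hreach y hy).symm⟩

theorem SimpleGraph.neighborSet_eq_pair {v x y : V} (hv : (G.neighborSet v).ncard = 2)
    (hx : G.Adj v x) (hy : G.Adj v y) (hxy : x ≠ y) : G.neighborSet v = {x, y} :=
  (Set.eq_of_subset_of_ncard_le (t := G.neighborSet v)
    (Set.insert_subset hx (Set.singleton_subset_iff.2 hy)) (by rw [hv, Set.ncard_pair hxy])
    (Set.finite_of_ncard_pos (by rw [hv]; norm_num))).symm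

theorem SimpleGraph.ncard_supp_eq_four_of_square (hreg : ∀ u, (G.neighborSet u).ncard = 2)
    {v x z y : V} (hvx : G.Adj v x) (hxz : G.Adj x z) (hzy : G.Adj z y) (hyv : G.Adj y v)
    (hvz : v ≠ z) (hxy : x ≠ y) : (G.connectedComponentMk v).supp.ncard = 4 := by
  have hN : ∀ u ∈ ({v, x, z, y} : Set V), G.neighborSet u ⊆ {v, x, z, y} := by
    rintro u (rfl | rfl | rfl | rfl)
    · rw [neighborSet_eq_pair (hreg u) hvx hyv.symm hxy]; simp [Set.insert_subset_iff]
    · rw [neighborSet_eq_pair (hreg u) hxz hvx.symm hvz.symm]; simp [Set.insert_subset_iff]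
    · rw [neighborSet_eq_pair (hreg u) hzy hxz.symm hxy.symm]; simp [Set.insert_subset_iff]
    · rw [neighborSet_eq_pair (hreg u) hyv hzy.symm hvz]; simp [Set.insert_subset_iff]
  rw [supp_connectedComponentMk_eq (by simp) (fun u hu w huw => hN u hu huw)]
  · rw [Set.ncard_insert_of_notMem (by simp [hvx.ne, hvz, hyv.ne.symm]),
      Set.ncard_insert_of_notMem (by simp [hxz.ne, hxy]), Set.ncard_pair hzy.ne]
  · rintro u (rfl | rfl | rfl | rfl)
    · exact .refl u
    · exact hvx.reachable
    · exact hvx.reachable.trans hxz.reachable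
    · exact hyv.reachable.symm

end TwoRegular

theorem ZMod.val_add_one_eq_ite {m : ℕ} (hm : 1 < m) (i : ZMod m) :
    (i + 1).val = if i.val + 1 = m then 0 else i.val + 1 := by
  have : Fact (1 < m) := ⟨hm⟩
  rw [ZMod.val_add, ZMod.val_one]
  have := ZMod.val_lt i
  split_ifs with h
  · rw [h, Nat.mod_self]
  · exact Nat.mod_eq_of_lt (by omega)

theorem ZMod.two_ne_zero_of_three_le {m : ℕ} (hm : 3 ≤ m) : (2 : ZMod m) ≠ 0 := by
  intro h
  have := (ZMod.natCast_eq_zero_iff 2 m).1 (by exact_mod_cast h)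
  exact absurd (Nat.le_of_dvd two_pos this) (by omega)

theorem one_ne_zero_of_two_ne_zero {R : Type*} [AddMonoidWithOne R] (h2 : (2 : R) ≠ 0) :
    (1 : R) ≠ 0 :=
  fun h => h2 (by rw [← one_add_one_eq_two, h, add_zero])

section LayerGraph

variable {m : ℕ} {L : Type*} (lab : ZMod m → L)

def layerGraph (S : L → ZMod 4 → Finset (ZMod 4)) : SimpleGraph (ZMod 4 × ZMod m) :=
  fromRel fun u v => v.2 = u.2 + 1 ∧ v.1 ∈ S (lab u.2) u.1

theorem layerGraph_adj (h1 : (1 : ZMod m) ≠ 0) {S : L → ZMod 4 → Finset (ZMod 4)}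
    {a b : ZMod 4} {i j : ZMod m} :
    (layerGraph lab S).Adj (a, i) (b, j) ↔
      (j = i + 1 ∧ b ∈ S (lab i) a) ∨ (i = j + 1 ∧ a ∈ S (lab j) b) := by
  rw [layerGraph, fromRel_adj]
  refine ⟨And.right, fun h => ⟨fun he => ?_, h⟩⟩
  obtain ⟨-, rfl⟩ := Prod.mk.inj he
  rcases h with ⟨h, -⟩ | ⟨h, -⟩ <;> exact h1 (by simpa using h)

theorem layerGraph_le_cm4 (S : L → ZMod 4 → Finset (ZMod 4)) : layerGraph lab S ≤ Cm4 m := by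
  intro u v h
  rw [layerGraph, fromRel_adj] at h
  refine (fromRel_adj _ _ _).2 ⟨h.1, h.2.imp ?_ ?_⟩ <;>
    exact fun h => by rw [h.1, add_sub_cancel_left]

theorem iSup_layerGraph {ι : Type*} (S : ι → L → ZMod 4 → Finset (ZMod 4))
    (hcover : ∀ l a b, ∃ t, b ∈ S t l a) : ⨆ t, layerGraph lab (S t) = Cm4 m := by
  refine le_antisymm (iSup_le fun t => layerGraph_le_cm4 lab (S t)) fun u v h => ?_
  obtain ⟨hne, h | h⟩ := (fromRel_adj _ _ _).1 h
  · obtain ⟨t, ht⟩ := hcover (lab u.2) u.1 v.1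
    exact iSup_adj.2
      ⟨t, (fromRel_adj _ _ _).2 ⟨hne, .inl ⟨sub_eq_iff_eq_add'.1 h, ht⟩⟩⟩
  · obtain ⟨t, ht⟩ := hcover (lab v.2) v.1 u.1
    exact iSup_adj.2
      ⟨t, (fromRel_adj _ _ _).2 ⟨hne, .inr ⟨sub_eq_iff_eq_add'.1 h, ht⟩⟩⟩

variable (h2 : (2 : ZMod m) ≠ 0)
include h2

theorem layerGraph_inf_eq_bot {S S' : L → ZMod 4 → Finset (ZMod 4)}
    (hdisj : ∀ l a, Disjoint (S l a) (S' l a)) : layerGraph lab S ⊓ layerGraph lab S' = ⊥ := by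
  ext ⟨a, i⟩ ⟨b, j⟩
  simp only [inf_adj, bot_adj, iff_false, not_and,
    layerGraph_adj lab (one_ne_zero_of_two_ne_zero h2)]
  rintro (⟨hj, hb⟩ | ⟨hi, ha⟩) (⟨hj', hb'⟩ | ⟨hi', ha'⟩)
  · exact Finset.disjoint_left.1 (hdisj _ _) hb hb'
  · exact h2 (by linear_combination -hj - hi')
  · exact h2 (by linear_combination -hi - hj')
  · exact Finset.disjoint_left.1 (hdisj _ _) ha ha'

theorem ncard_neighborSet_layerGraph {T : L → L → Prop} (hT : ∀ i, T (lab i) (lab (i + 1)))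
    {S : L → ZMod 4 → Finset (ZMod 4)}
    (hdeg : ∀ l l', T l l' → ∀ a,
      (S l' a).card + (Finset.univ.filter fun b => a ∈ S l b).card = 2)
    (v : ZMod 4 × ZMod m) : ((layerGraph lab S).neighborSet v).ncard = 2 := by
  obtain ⟨a, i⟩ := v
  have hN : (layerGraph lab S).neighborSet (a, i) =
      ↑((S (lab i) a).image (·, i + 1) ∪
        (Finset.univ.filter fun b => a ∈ S (lab (i - 1)) b).image (·, i - 1)) := by
    ext ⟨b, j⟩
    simp only [mem_neighborSet, layerGraph_adj lab (one_ne_zero_of_two_ne_zero h2),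
      Finset.coe_union, Finset.coe_image, Finset.coe_filter, Set.mem_union, Set.mem_image,
      Finset.mem_coe, Finset.mem_univ, true_and, Prod.mk.injEq]
    constructor
    · rintro (⟨rfl, hb⟩ | ⟨rfl, ha⟩)
      · exact .inl ⟨b, hb, rfl, rfl⟩
      · exact .inr ⟨b, by simpa using ha, rfl, by simp⟩
    · rintro (⟨b, hb, rfl, rfl⟩ | ⟨b, ha, rfl, rfl⟩)
      · exact .inl ⟨rfl, hb⟩
      · exact .inr ⟨by simp, ha⟩
  have hdisj : Disjoint ((S (lab i) a).image (·, i + 1))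
      ((Finset.univ.filter fun b => a ∈ S (lab (i - 1)) b).image (·, i - 1)) := by
    simp only [Finset.disjoint_left, Finset.mem_image]
    rintro _ ⟨b, -, rfl⟩ ⟨c, -, he⟩
    exact h2 (by linear_combination -(Prod.mk.inj he).2)
  have hinj : ∀ j : ZMod m, Function.Injective fun b : ZMod 4 => (b, j) :=
    fun j _ _ h => (Prod.mk.inj h).1
  rw [hN, Set.ncard_coe_finset, Finset.card_union_of_disjoint hdisj,
    Finset.card_image_of_injective _ (hinj _), Finset.card_image_of_injective _ (hinj _)]
  exact hdeg _ _ (by simpa using hT (i - 1)) a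

end LayerGraph

section Strands

variable {m : ℕ} {L : Type*} (lab : ZMod m → L)

/-- The components are the strands `j ↦ (G (lab j) b, j)`. -/
theorem ncard_supp_layerGraph_matching [NeZero m] (h1 : (1 : ZMod m) ≠ 0) {T : L → L → Prop}
    (hT : ∀ i, T (lab i) (lab (i + 1))) (σ G : L → ZMod 4 → ZMod 4)
    (hG : ∀ l l', T l l' → ∀ b, σ l (G l b) = G l' b) (hGbij : ∀ l, (G l).Bijective)
    (v : ZMod 4 × ZMod m) :
    ((layerGraph lab fun l a => {σ l a}).connectedComponentMk v).supp.ncard = m := by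
  obtain ⟨a, i⟩ := v
  obtain ⟨b, rfl⟩ := (hGbij (lab i)).2 a
  set H := layerGraph lab fun l a => {σ l a}
  set f : ZMod m → ZMod 4 × ZMod m := fun j => (G (lab j) b, j)
  have hstep : ∀ j, H.Adj (f j) (f (j + 1)) := fun j =>
    (layerGraph_adj lab h1).2 (.inl ⟨rfl, by simp [hG _ _ (hT j)]⟩)
  have hreach : ∀ j (k : ℕ), H.Reachable (f j) (f (j + k)) := by
    intro j k
    induction k with
    | zero => simp
    | succ k ih => exact ih.trans (by simpa [add_assoc] using (hstep (j + k)).reachable)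
  have hclosed : ∀ x ∈ Set.range f, ∀ y, H.Adj x y → y ∈ Set.range f := by
    rintro _ ⟨j, rfl⟩ ⟨c, j'⟩ h
    rcases (layerGraph_adj lab h1).1 h with ⟨rfl, hc⟩ | ⟨rfl, hc⟩
    · rw [Finset.mem_singleton.1 hc, hG _ _ (hT j)]
      exact ⟨j + 1, rfl⟩
    · obtain ⟨b', rfl⟩ := (hGbij (lab j')).2 c
      rw [Finset.mem_singleton, hG _ _ (hT j')] at hc
      rw [← (hGbij _).1 hc]
      exact ⟨j', rfl⟩
  have hsupp : (H.connectedComponentMk (f i)).supp = Set.range f := by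
    refine supp_connectedComponentMk_eq ⟨i, rfl⟩ hclosed ?_
    rintro _ ⟨j, rfl⟩
    simpa using hreach i (j - i).val
  rw [show (G (lab i) b, i) = f i from rfl, hsupp, Set.ncard_range_of_injective, Nat.card_zmod]
  exact fun j j' h => (Prod.mk.inj h).2

end Strands

section Windows

variable {L : Type*} (S : L → ZMod 4 → Finset (ZMod 4))

/-- The layer graph on five consecutive layers `0, …, 4`, the gap after layer `k` being
labelled `w k`. -/
def windowStep (w : Fin 4 → L) (p q : ZMod 4 × Fin 5) : Prop :=
  ∃ k : Fin 4, p.2 = k.castSucc ∧ q.2 = k.succ ∧ q.1 ∈ S (w k) p.1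

def windowAdj (w : Fin 4 → L) (p q : ZMod 4 × Fin 5) : Prop :=
  windowStep S w p q ∨ windowStep S w q p

def WindowSquare (w : Fin 4 → L) (a : ZMod 4) : Prop :=
  ∃ x, windowAdj S w (a, 2) x ∧ ∃ z, windowAdj S w x z ∧ (a, 2) ≠ z ∧
    ∃ y, windowAdj S w z y ∧ windowAdj S w y (a, 2) ∧ x ≠ y

instance (w : Fin 4 → L) : DecidableRel (windowAdj S w) := fun _ _ => by
  unfold windowAdj windowStep; infer_instance

instance (w : Fin 4 → L) (a : ZMod 4) : Decidable (WindowSquare S w a) := by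
  unfold WindowSquare; infer_instance

variable {S}

theorem windowAdj.val_snd_eq_or {w : Fin 4 → L} {p q : ZMod 4 × Fin 5} (h : windowAdj S w p q) :
    (q.2 : ℕ) = p.2 + 1 ∨ (p.2 : ℕ) = q.2 + 1 := by
  rcases h with ⟨k, hp, hq, -⟩ | ⟨k, hq, hp, -⟩ <;> simp [hp, hq]

variable {m : ℕ} (lab : ZMod m → L)

def windowAt (i : ZMod m) (p : ZMod 4 × Fin 5) : ZMod 4 × ZMod m :=
  (p.1, i + (p.2 : ℕ) - 2)

theorem layerGraph_adj_windowAt (h1 : (1 : ZMod m) ≠ 0) (i : ZMod m) {p q : ZMod 4 × Fin 5}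
    (h : windowAdj S (fun k => lab (i + (k : ℕ) - 2)) p q) :
    (layerGraph lab S).Adj (windowAt i p) (windowAt i q) := by
  rw [windowAt, windowAt, layerGraph_adj lab h1]
  rcases h with ⟨k, hp, hq, hk⟩ | ⟨k, hq, hp, hk⟩
  · exact .inl ⟨by simp [hp, hq]; ring, by simpa [hp] using hk⟩
  · exact .inr ⟨by simp [hp, hq]; ring, by simpa [hq] using hk⟩

theorem windowAt_ne (h2 : (2 : ZMod m) ≠ 0) (i : ZMod m) {p q : ZMod 4 × Fin 5} (hpq : p ≠ q)
    (hd : (p.2 : ℕ) = q.2 ∨ (p.2 : ℕ) = q.2 + 2 ∨ (q.2 : ℕ) = p.2 + 2) :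
    windowAt i p ≠ windowAt i q := by
  intro h
  obtain ⟨h₁, h₂⟩ := Prod.mk.inj h
  rcases hd with hd | hd | hd
  · exact hpq (Prod.ext h₁ (Fin.ext hd))
  · rw [hd] at h₂; push_cast at h₂; exact h2 (by linear_combination h₂)
  · rw [hd] at h₂; push_cast at h₂; exact h2 (by linear_combination -h₂)

theorem ncard_supp_layerGraph_eq_four (h2 : (2 : ZMod m) ≠ 0) {T : L → L → Prop}
    (hT : ∀ i, T (lab i) (lab (i + 1)))
    (hreg : ∀ v, ((layerGraph lab S).neighborSet v).ncard = 2)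
    (hsq : ∀ l₀ l₁ l₂ l₃, T l₀ l₁ → T l₁ l₂ → T l₂ l₃ → ∀ a, WindowSquare S ![l₀, l₁, l₂, l₃] a)
    (v : ZMod 4 × ZMod m) : ((layerGraph lab S).connectedComponentMk v).supp.ncard = 4 := by
  obtain ⟨a, i⟩ := v
  set w : Fin 4 → L := fun k => lab (i + (k : ℕ) - 2)
  have hchain : ∀ k : ℕ, T (lab (i + k - 2)) (lab (i + (k + 1 : ℕ) - 2)) := fun k => by
    convert hT (i + k - 2) using 2; push_cast; ring
  have hw : ![w 0, w 1, w 2, w 3] = w := by ext k; fin_cases k <;> rfl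
  obtain ⟨x, hvx, z, hxz, hvz, y, hzy, hyv, hxy⟩ :=
    hw ▸ hsq (w 0) (w 1) (w 2) (w 3) (hchain 0) (hchain 1) (hchain 2) a
  have hadj : ∀ {p q}, windowAdj S w p q → (layerGraph lab S).Adj (windowAt i p) (windowAt i q) :=
    layerGraph_adj_windowAt lab (one_ne_zero_of_two_ne_zero h2) i
  have hmid : windowAt i (a, 2) = (a, i) := by simp [windowAt]
  rw [← hmid]
  -- opposite corners of the square lie at most two layers apart, so `windowAt i` keeps them apart
  refine ncard_supp_eq_four_of_square hreg (hadj hvx) (hadj hxz) (hadj hzy) (hadj hyv)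
    (windowAt_ne h2 i hvz ?_) (windowAt_ne h2 i hxy ?_)
  · have := hvx.val_snd_eq_or; have := hxz.val_snd_eq_or; omega
  · have := hvx.val_snd_eq_or; have := hyv.val_snd_eq_or; omega

end Windows

/-- Labels `0` and `1` mark the layers of even and odd index; for odd `m` the last two layers
are labelled `2` and `3` instead, and carry the gadget that repairs the parity. -/
def layerLabel (m : ℕ) (i : ZMod m) : Fin 4 :=
  if m % 2 = 1 ∧ i.val + 2 = m then 2
  else if m % 2 = 1 ∧ i.val + 1 = m then 3
  else if i.val % 2 = 0 then 0 else 1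

def LabelStep (l l' : Fin 4) : Prop :=
  (l, l') ∈ ({(0, 1), (1, 0), (0, 2), (2, 3), (3, 0)} : Finset (Fin 4 × Fin 4))

instance : DecidableRel LabelStep := fun _ _ => Finset.decidableMem _ _

theorem layerLabel_step {m : ℕ} (hm : 3 ≤ m) (i : ZMod m) :
    LabelStep (layerLabel m i) (layerLabel m (i + 1)) := by
  have : NeZero m := ⟨by omega⟩
  have := ZMod.val_lt i
  rw [layerLabel, layerLabel, ZMod.val_add_one_eq_ite (by omega)]
  split_ifs <;> first | decide | omega

def squareTable : Fin 2 → Fin 4 → ZMod 4 → Finset (ZMod 4)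
  | 0, 0 | 0, 1 => ![∅, ∅, {0, 1}, {0, 1}]
  | 0, 2 => ![∅, ∅, {0, 1}, {2, 3}]
  | 0, 3 => ![{0}, {0}, {1}, {1}]
  | 1, 0 | 1, 1 => ![{2, 3}, {2, 3}, ∅, ∅]
  | 1, 2 => ![{0, 2}, {1, 3}, ∅, ∅]
  | 1, 3 => ![{2}, {3}, {2}, {3}]

def matchingTable : Fin 2 → Fin 4 → ZMod 4 → ZMod 4
  | 0, 0 | 0, 1 => ![0, 1, 3, 2]
  | 0, 2 => ![3, 0, 2, 1]
  | 0, 3 => ![1, 2, 3, 0]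
  | 1, 0 | 1, 1 => ![1, 0, 2, 3]
  | 1, 2 => ![1, 2, 3, 0]
  | 1, 3 => ![3, 1, 0, 2]

/-- `strandTable t l b` is where the `b`-th cycle of the `t`-th `C_m`-factor meets a layer
labelled `l`. -/
def strandTable : Fin 2 → Fin 4 → ZMod 4 → ZMod 4
  | 0, 0 | 1, 0 => ![0, 1, 2, 3]
  | 0, 1 | 0, 2 => ![0, 1, 3, 2]
  | 0, 3 => ![3, 0, 1, 2]
  | 1, 1 | 1, 2 => ![1, 0, 2, 3]
  | 1, 3 => ![2, 1, 3, 0]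

def factorTable : Fin 4 → Fin 4 → ZMod 4 → Finset (ZMod 4) :=
  ![squareTable 0, squareTable 1, fun l a => {matchingTable 0 l a},
    fun l a => {matchingTable 1 l a}]

theorem factorTable_cover : ∀ l a b, ∃ t, b ∈ factorTable t l a := by decide

theorem factorTable_disjoint :
    ∀ s t, s ≠ t → ∀ l a, Disjoint (factorTable s l a) (factorTable t l a) := by
  decide

theorem factorTable_degree : ∀ t l l', LabelStep l l' → ∀ a,
    (factorTable t l' a).card + (Finset.univ.filter fun b => a ∈ factorTable t l b).card = 2 := by
  decide

theorem squareTable_windowSquare : ∀ t l₀ l₁ l₂ l₃, LabelStep l₀ l₁ → LabelStep l₁ l₂ →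
    LabelStep l₂ l₃ → ∀ a, WindowSquare (squareTable t) ![l₀, l₁, l₂, l₃] a := by
  decide

theorem matchingTable_strandTable : ∀ t l l', LabelStep l l' → ∀ b,
    matchingTable t l (strandTable t l b) = strandTable t l' b := by
  decide

theorem strandTable_bijective : ∀ t l, (strandTable t l).Bijective := by decide

/-- For every `m ≥ 3`, `C_m[4]` has a 2-factorization into exactly two
`C_4`-factors and two `C_m`-factors. -/
theorem stmt_3 (m : ℕ) (hm : 3 ≤ m) :
    ∃ F : Fin 4 → SimpleGraph (ZMod 4 × ZMod m),
      IsDecompositionF (Cm4 m) F ∧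
      IsCnFactor (Cm4 m) (F 0) 4 ∧ IsCnFactor (Cm4 m) (F 1) 4 ∧
      IsCnFactor (Cm4 m) (F 2) m ∧ IsCnFactor (Cm4 m) (F 3) m := by
  have : NeZero m := ⟨by omega⟩
  have h2 := ZMod.two_ne_zero_of_three_le hm
  have h1 := one_ne_zero_of_two_ne_zero h2
  have hT := layerLabel_step hm
  have hreg t := ncard_neighborSet_layerGraph (layerLabel m) h2 hT (factorTable_degree t)
  refine ⟨fun t => layerGraph (layerLabel m) (factorTable t),
    ⟨fun t => layerGraph_le_cm4 _ _,
      fun s t hst => layerGraph_inf_eq_bot _ h2 (factorTable_disjoint s t hst),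
      iSup_layerGraph _ _ factorTable_cover⟩, ?_, ?_, ?_, ?_⟩
  · exact ⟨layerGraph_le_cm4 _ _, hreg 0,
      ncard_supp_layerGraph_eq_four _ h2 hT (hreg 0) (squareTable_windowSquare 0)⟩
  · exact ⟨layerGraph_le_cm4 _ _, hreg 1,
      ncard_supp_layerGraph_eq_four _ h2 hT (hreg 1) (squareTable_windowSquare 1)⟩
  · exact ⟨layerGraph_le_cm4 _ _, hreg 2, ncard_supp_layerGraph_matching _ h1 hT _ _
      (matchingTable_strandTable 0) (strandTable_bijective 0)⟩
  · exact ⟨layerGraph_le_cm4 _ _, hreg 3, ncard_supp_layerGraph_matching _ h1 hT _ _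
      (matchingTable_strandTable 1) (strandTable_bijective 1)⟩
end

section
/- For every odd integer m ≥ 3 and any C_m-factor F of C_m[4]: since m is odd, each m-cycle of F contains exactly one vertex from each 'column' {(a,i) : a ∈ Z_4} of C_m[4]. Consequently, if F_1, F_2, F_3 are three pairwise edge-disjoint C_m-factors of C_m[4], then the complement graph C_m[4] − (F_1 ∪ F_2 ∪ F_3) is a 2-regular graph in which every vertex (a,i) has exactly one neighbour in column i−1 and exactly one neighbour in column i+1; in particular, this complement contains no 4-cycle when m > 4. -/
open SimpleGraph

/-!
Every edge of `C_m[4]` moves the column index in `ℤ_m` by `±1`. If a component of a `C_m`-factor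
missed some column `j`, the parity of its column index counted from `j` would properly 2-colour
it, and double counting its edges between the two colour classes of this 2-regular component
would make its size `m` even. So the projection of a component to the columns is onto, hence
bijective. Each vertex therefore has exactly one `F`-neighbour in each of its two adjacent
columns; since `v` is joined to all four vertices of each, removing three edge-disjoint factors
leaves exactly one. In a graph with one neighbour per adjacent column a cycle can never turn back,
so its column index advances monotonically and its length is a multiple of `m`.
-/

lemma ZMod.val_add_one_of_add_one_ne_zero {m : ℕ} [NeZero m] {x : ZMod m} (hx : x + 1 ≠ 0) :
    (x + 1).val = x.val + 1 := by
  have hcast : ((x.val + 1 : ℕ) : ZMod m) = x + 1 := by push_cast [ZMod.natCast_zmod_val]; rfl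
  rw [← hcast, ZMod.val_natCast]
  refine Nat.mod_eq_of_lt (lt_of_le_of_ne x.val_lt ?_)
  rintro hm
  rw [hm, ZMod.natCast_self] at hcast
  exact hx hcast.symm

namespace SimpleGraph

variable {V : Type*} {G : SimpleGraph V}

theorem ncard_neighborSet_sup_inter [Finite V] {G₁ G₂ : SimpleGraph V} (h : Disjoint G₁ G₂)
    (v : V) (s : Set V) :
    ((G₁ ⊔ G₂).neighborSet v ∩ s).ncard
      = (G₁.neighborSet v ∩ s).ncard + (G₂.neighborSet v ∩ s).ncard := by
  have hdisj : Disjoint (G₁.neighborSet v) (G₂.neighborSet v) := by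
    rw [Set.disjoint_iff_inter_eq_empty, ← neighborSet_inf, h.eq_bot, neighborSet_bot]
  rw [neighborSet_sup, Set.union_inter_distrib_right]
  exact Set.ncard_union_eq (hdisj.mono Set.inter_subset_left Set.inter_subset_left)

theorem ncard_neighborSet_sdiff_inter [Finite V] {H : SimpleGraph V} (h : H ≤ G)
    (v : V) (s : Set V) :
    ((G \ H).neighborSet v ∩ s).ncard
      = (G.neighborSet v ∩ s).ncard - (H.neighborSet v ∩ s).ncard := by
  rw [neighborSet_sdiff, Set.inter_sdiff_distrib_right]
  exact Set.ncard_sdiff (Set.inter_subset_inter_left s fun _ hu => h hu)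

variable [Fintype V]

theorem ConnectedComponent.even_ncard_supp_of_bicoloring {d : ℕ}
    (hdeg : ∀ v, (G.neighborSet v).ncard = d) (hd : d ≠ 0) (C : G.ConnectedComponent)
    (c : V → Bool) (hc : ∀ u ∈ C.supp, ∀ v, G.Adj u v → c u ≠ c v) :
    Even C.supp.ncard := by
  classical
  set s := {u ∈ C.supp.toFinset | c u = true}
  set t := {u ∈ C.supp.toFinset | ¬ c u = true}
  have hs : ∀ a ∈ s, (t.bipartiteAbove G.Adj a).card = d := by
    intro a ha
    simp only [s, Finset.mem_filter, Set.mem_toFinset] at ha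
    rw [← hdeg a, Set.ncard_eq_toFinset_card']
    congr 1
    ext b
    simp only [Finset.bipartiteAbove, t, Finset.mem_filter, Set.mem_toFinset, mem_neighborSet]
    refine ⟨fun h => h.2, fun h => ⟨⟨C.mem_supp_of_adj_mem_supp ha.1 h, ?_⟩, h⟩⟩
    have := hc a ha.1 b h
    simp_all
  have ht : ∀ b ∈ t, (s.bipartiteBelow G.Adj b).card = d := by
    intro b hb
    simp only [t, Finset.mem_filter, Set.mem_toFinset] at hb
    rw [← hdeg b, Set.ncard_eq_toFinset_card']
    congr 1
    ext a
    simp only [Finset.bipartiteBelow, s, Finset.mem_filter, Set.mem_toFinset, mem_neighborSet]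
    refine ⟨fun h => h.2.symm, fun h => ⟨⟨C.mem_supp_of_adj_mem_supp hb.1 h, ?_⟩, h.symm⟩⟩
    have := hc b hb.1 a h
    simp_all
  have hst : s.card = t.card :=
    Nat.eq_of_mul_eq_mul_right (Nat.pos_of_ne_zero hd) (Finset.card_mul_eq_card_mul G.Adj hs ht)
  rw [Set.ncard_eq_toFinset_card', ← Finset.card_filter_add_card_filter_not (fun u => c u = true)]
  exact ⟨s.card, by rw [← hst]⟩

theorem ConnectedComponent.exists_mem_supp_of_odd_ncard {m d : ℕ} [NeZero m]
    (hdeg : ∀ v, (G.neighborSet v).ncard = d) (hd : d ≠ 0) (f : V → ZMod m)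
    (hf : ∀ u v, G.Adj u v → f v = f u + 1 ∨ f v = f u - 1) (C : G.ConnectedComponent)
    (hC : Odd C.supp.ncard) (j : ZMod m) : ∃ u ∈ C.supp, f u = j := by
  by_contra! hj
  have hstep : ∀ {u v}, u ∈ C.supp → v ∈ C.supp → f v = f u + 1 →
      (f v - j).val = (f u - j).val + 1 := by
    intro u v hu hv huv
    have hsub : f v - j = f u - j + 1 := by rw [huv]; ring
    -- `f v ≠ j` rules out the wrap-around from `m - 1` to `0`
    rw [hsub, ZMod.val_add_one_of_add_one_ne_zero (hsub ▸ sub_ne_zero.2 (hj v hv))]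
  refine Nat.not_even_iff_odd.2 hC (C.even_ncard_supp_of_bicoloring hdeg hd
    (fun u => decide (Even (f u - j).val)) fun u hu v huv => ?_)
  have hv : v ∈ C.supp := C.mem_supp_of_adj_mem_supp hu huv
  have hparity : ∀ n k : ℕ, k = n + 1 → decide (Even n) ≠ decide (Even k) := by
    rintro n _ rfl
    by_cases hn : Even n <;> simp [hn, Nat.even_add_one]
  rcases hf u v huv with h | h
  · exact hparity _ _ (hstep hu hv h)
  · exact (hparity _ _ (hstep hv hu (by rw [h]; ring))).symm

end SimpleGraph

theorem Set.ncard_setOf_snd_eq {α β : Type*} [Finite α] (b : β) :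
    {u : α × β | u.2 = b}.ncard = Nat.card α := by
  have : {u : α × β | u.2 = b} = Set.univ ×ˢ {b} := by ext; simp
  rw [this, Set.ncard_prod, Set.ncard_univ, Set.ncard_singleton, mul_one]

open SimpleGraph

namespace Cm4

variable {m : ℕ} {G : SimpleGraph (ZMod 4 × ZMod m)}

theorem snd_eq_of_adj {u v : ZMod 4 × ZMod m} (h : (Cm4 m).Adj u v) :
    v.2 = u.2 + 1 ∨ v.2 = u.2 - 1 := by
  rcases ((fromRel_adj _ u v).1 h).2 with h | h
  · left; linear_combination h
  · right; linear_combination -h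

theorem neighborSet_inter_column [Fact (1 < m)] {v : ZMod 4 × ZMod m} {c : ZMod m}
    (hc : c = v.2 - 1 ∨ c = v.2 + 1) :
    (Cm4 m).neighborSet v ∩ {u | u.2 = c} = {u | u.2 = c} := by
  refine Set.inter_eq_right.2 fun u (hu : u.2 = c) => ?_
  rw [mem_neighborSet, Cm4, fromRel_adj]
  refine ⟨?_, ?_⟩
  · rintro rfl
    rcases hc with h | h
    · exact one_ne_zero (by linear_combination h + hu)
    · exact one_ne_zero (by linear_combination -h - hu)
  · rcases hc with h | h
    · right; linear_combination -hu - h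
    · left; linear_combination hu + h

theorem ncard_neighborSet_eq_add [NeZero m] (hle : G ≤ Cm4 m) (h2 : (2 : ZMod m) ≠ 0)
    (v : ZMod 4 × ZMod m) :
    (G.neighborSet v).ncard = (G.neighborSet v ∩ {u | u.2 = v.2 - 1}).ncard
      + (G.neighborSet v ∩ {u | u.2 = v.2 + 1}).ncard := by
  have hcover : G.neighborSet v
      = G.neighborSet v ∩ {u | u.2 = v.2 - 1} ∪ G.neighborSet v ∩ {u | u.2 = v.2 + 1} := by
    rw [← Set.inter_union_distrib_left]
    exact (Set.inter_eq_left.2 fun u hu => (snd_eq_of_adj (hle hu)).symm).symm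
  have hdisj : Disjoint {u : ZMod 4 × ZMod m | u.2 = v.2 - 1} {u | u.2 = v.2 + 1} :=
    Set.disjoint_left.2 fun u (h₁ : u.2 = _) (h₂ : u.2 = _) => h2 (by linear_combination h₁ - h₂)
  conv_lhs => rw [hcover]
  exact Set.ncard_union_eq (hdisj.mono Set.inter_subset_right Set.inter_subset_right)

theorem snd_sub_eq_of_adj_of_adj [NeZero m] (hle : G ≤ Cm4 m)
    (hG : ∀ v c, (c = v.2 - 1 ∨ c = v.2 + 1) → (G.neighborSet v ∩ {u | u.2 = c}).ncard ≤ 1)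
    {a b c : ZMod 4 × ZMod m} (hab : G.Adj a b) (hbc : G.Adj b c) (hac : a ≠ c) :
    c.2 - b.2 = b.2 - a.2 := by
  have hcol : a.2 ≠ c.2 := fun h => hac <| (Set.ncard_le_one_iff).1
    (hG b a.2 (snd_eq_of_adj (hle hab.symm)).symm) ⟨hab.symm, rfl⟩ ⟨hbc, h.symm⟩
  rcases snd_eq_of_adj (hle hab) with h₁ | h₁ <;> rcases snd_eq_of_adj (hle hbc) with h₂ | h₂
  · linear_combination h₂ - h₁
  · exact absurd (by linear_combination -h₁ - h₂) hcol
  · exact absurd (by linear_combination -h₁ - h₂) hcol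
  · linear_combination h₂ - h₁

theorem dvd_length_of_isCycle [NeZero m] (hle : G ≤ Cm4 m)
    (hG : ∀ v c, (c = v.2 - 1 ∨ c = v.2 + 1) → (G.neighborSet v ∩ {u | u.2 = c}).ncard ≤ 1)
    {v : ZMod 4 × ZMod m} {p : G.Walk v v} (hp : p.IsCycle) : m ∣ p.length := by
  set d : ℕ → ZMod m := fun i => (p.getVert (i + 1)).2 - (p.getVert i).2
  have hconst : ∀ i < p.length, d i = d 0 := by
    intro i hi
    induction i with
    | zero => rfl
    | succ i ih =>
      rw [← ih (by omega)]
      have hne := hp.getVert_sub_one_ne_getVert_add_one (i := i + 1) (by omega)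
      rw [Nat.add_sub_cancel] at hne
      exact snd_sub_eq_of_adj_of_adj hle hG (p.adj_getVert_succ (by omega))
        (p.adj_getVert_succ hi) hne
  have hsum : ∑ i ∈ Finset.range p.length, d i = 0 := by
    rw [Finset.sum_range_sub (fun i => (p.getVert i).2), p.getVert_length, p.getVert_zero,
      sub_self]
  rw [Finset.sum_congr rfl fun i hi => hconst i (Finset.mem_range.1 hi), Finset.sum_const,
    Finset.card_range, nsmul_eq_mul] at hsum
  rw [← ZMod.natCast_eq_zero_iff]
  rcases snd_eq_of_adj (hle (p.adj_getVert_succ (i := 0) (by have := hp.three_le_length; omega)))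
    with h | h
  · simpa [d, h] using hsum
  · simpa [d, h] using hsum

end Cm4

namespace IsCnFactor

variable {m : ℕ} [NeZero m] {F : SimpleGraph (ZMod 4 × ZMod m)}

theorem ncard_supp_inter_column (hmo : Odd m) (hF : IsCnFactor (Cm4 m) F m)
    (C : F.ConnectedComponent) (i : ZMod m) : (C.supp ∩ {u | u.2 = i}).ncard = 1 := by
  obtain ⟨hle, hdeg, hsupp⟩ := hF
  have hC : C.supp.ncard = m := C.ind hsupp
  have hsurj : ∀ j, ∃ u ∈ C.supp, u.2 = j :=
    C.exists_mem_supp_of_odd_ncard hdeg two_ne_zero Prod.snd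
      (fun u v h => Cm4.snd_eq_of_adj (hle h)) (by rwa [hC])
  have hinj : Set.InjOn Prod.snd C.supp := fun a ha b hb hab =>
    Set.inj_on_of_surj_on_of_ncard_le (t := Set.univ) (fun u _ => u.2) (fun _ _ => trivial)
      (fun j _ => by simpa using hsurj j) (by simp [hC]) ha hb hab
  obtain ⟨u, hu, rfl⟩ := hsurj i
  refine Set.ncard_eq_one.2 ⟨u, Set.ext fun w => ⟨fun hw => hinj hw.1 hu hw.2, ?_⟩⟩
  rintro rfl
  exact ⟨hu, rfl⟩

theorem ncard_neighborSet_inter_column (hmo : Odd m) (h2 : (2 : ZMod m) ≠ 0)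
    (hF : IsCnFactor (Cm4 m) F m) {v : ZMod 4 × ZMod m} {c : ZMod m}
    (hc : c = v.2 - 1 ∨ c = v.2 + 1) : (F.neighborSet v ∩ {u | u.2 = c}).ncard = 1 := by
  have hle_one : ∀ j, (F.neighborSet v ∩ {u | u.2 = j}).ncard ≤ 1 := fun j =>
    (hF.ncard_supp_inter_column hmo (F.connectedComponentMk v) j).symm ▸
      Set.ncard_le_ncard (Set.inter_subset_inter_left _ fun u hu =>
        (ConnectedComponent.connectedComponentMk_eq_of_adj hu).symm)
  have hsum := Cm4.ncard_neighborSet_eq_add hF.1 h2 v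
  rw [hF.2.1 v] at hsum
  have hlow := hle_one (v.2 - 1)
  have hhigh := hle_one (v.2 + 1)
  rcases hc with rfl | rfl <;> omega

theorem ncard_sdiff_neighborSet_inter_column [Fact (1 < m)] (hmo : Odd m)
    (h2 : (2 : ZMod m) ≠ 0) {F₁ F₂ F₃ : SimpleGraph (ZMod 4 × ZMod m)}
    (hF₁ : IsCnFactor (Cm4 m) F₁ m) (hF₂ : IsCnFactor (Cm4 m) F₂ m)
    (hF₃ : IsCnFactor (Cm4 m) F₃ m) (h₁₂ : F₁ ⊓ F₂ = ⊥) (h₁₃ : F₁ ⊓ F₃ = ⊥) (h₂₃ : F₂ ⊓ F₃ = ⊥)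
    {v : ZMod 4 × ZMod m} {c : ZMod m} (hc : c = v.2 - 1 ∨ c = v.2 + 1) :
    ((Cm4 m \ (F₁ ⊔ F₂ ⊔ F₃)).neighborSet v ∩ {u | u.2 = c}).ncard = 1 := by
  have h₁₂₃ : Disjoint (F₁ ⊔ F₂) F₃ :=
    disjoint_sup_left.2 ⟨disjoint_iff.2 h₁₃, disjoint_iff.2 h₂₃⟩
  rw [ncard_neighborSet_sdiff_inter (sup_le (sup_le hF₁.1 hF₂.1) hF₃.1),
    ncard_neighborSet_sup_inter h₁₂₃, ncard_neighborSet_sup_inter (disjoint_iff.2 h₁₂),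
    hF₁.ncard_neighborSet_inter_column hmo h2 hc, hF₂.ncard_neighborSet_inter_column hmo h2 hc,
    hF₃.ncard_neighborSet_inter_column hmo h2 hc, Cm4.neighborSet_inter_column hc,
    Set.ncard_setOf_snd_eq, Nat.card_zmod]

end IsCnFactor

/-- For odd `m ≥ 3`: every `C_m`-factor of `C_m[4]` meets each column
`{(a,i) : a ∈ Z_4}` in exactly one vertex per cycle; consequently, removing
three pairwise edge-disjoint `C_m`-factors leaves a 2-regular graph in which
every vertex has exactly one neighbour in each of the two adjacent columns,
and this leftover graph contains no 4-cycle when `m > 4`. -/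
theorem stmt_5 (m : ℕ) (hm : 3 ≤ m) (hmo : Odd m) :
    (∀ F : SimpleGraph (ZMod 4 × ZMod m), IsCnFactor (Cm4 m) F m →
      ∀ (v : ZMod 4 × ZMod m) (i : ZMod m),
        ((F.connectedComponentMk v).supp ∩ {u : ZMod 4 × ZMod m | u.2 = i}).ncard = 1) ∧
    (∀ F1 F2 F3 : SimpleGraph (ZMod 4 × ZMod m),
      IsCnFactor (Cm4 m) F1 m → IsCnFactor (Cm4 m) F2 m → IsCnFactor (Cm4 m) F3 m →
      F1 ⊓ F2 = ⊥ → F1 ⊓ F3 = ⊥ → F2 ⊓ F3 = ⊥ →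
      (∀ v, ((Cm4 m \ (F1 ⊔ F2 ⊔ F3)).neighborSet v).ncard = 2) ∧
      (∀ v : ZMod 4 × ZMod m,
        ((Cm4 m \ (F1 ⊔ F2 ⊔ F3)).neighborSet v ∩
          {u : ZMod 4 × ZMod m | u.2 = v.2 - 1}).ncard = 1 ∧
        ((Cm4 m \ (F1 ⊔ F2 ⊔ F3)).neighborSet v ∩
          {u : ZMod 4 × ZMod m | u.2 = v.2 + 1}).ncard = 1) ∧
      (4 < m → ∀ (v : ZMod 4 × ZMod m) (c : (Cm4 m \ (F1 ⊔ F2 ⊔ F3)).Walk v v),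
        c.IsCycle → c.length ≠ 4)) := by
  have : Fact (1 < m) := ⟨by omega⟩
  have h2 : (2 : ZMod m) ≠ 0 := by
    rw [← Nat.cast_ofNat, Ne, ZMod.natCast_eq_zero_iff]
    exact Nat.not_dvd_of_pos_of_lt two_pos (by omega)
  refine ⟨fun F hF v => hF.ncard_supp_inter_column hmo _,
    fun F₁ F₂ F₃ hF₁ hF₂ hF₃ h₁₂ h₁₃ h₂₃ => ?_⟩
  have hcol : ∀ v c, (c = v.2 - 1 ∨ c = v.2 + 1) →
      ((Cm4 m \ (F₁ ⊔ F₂ ⊔ F₃)).neighborSet v ∩ {u | u.2 = c}).ncard = 1 := fun _ _ hc =>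
    IsCnFactor.ncard_sdiff_neighborSet_inter_column hmo h2 hF₁ hF₂ hF₃ h₁₂ h₁₃ h₂₃ hc
  refine ⟨fun v => ?_, fun v => ⟨hcol v _ (.inl rfl), hcol v _ (.inr rfl)⟩,
    fun hm₄ v p hp hlen => ?_⟩
  · rw [Cm4.ncard_neighborSet_eq_add sdiff_le h2, hcol v _ (.inl rfl), hcol v _ (.inr rfl)]
  · have hdvd := Cm4.dvd_length_of_isCycle sdiff_le (fun w c hc => (hcol w c hc).le) hp
    rw [hlen] at hdvd
    exact absurd (Nat.le_of_dvd four_pos hdvd) (by omega)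
end

section
/- For every integer m ≥ 3, the graph C_m[2] (the lexicographic product of the m-cycle with two independent vertices) admits a 1-factorization, i.e., a partition of its edge set into four perfect matchings. -/
open SimpleGraph

/-- `C_m[2]`: the graph on `Z_2 × Z_m` where `(a,i) ~ (b,j)` iff `i - j ≡ ±1 (mod m)`. -/
def Cm2 (m : ℕ) : SimpleGraph (ZMod 2 × ZMod m) :=
  SimpleGraph.fromRel (fun u v => v.2 - u.2 = 1)

/-! Between consecutive positions `i` and `i + 1` the edges of `C_m[2]` form a `K_{2,2}`. A choice
`f i ∈ ℤ₂` for every position gives a perfect matching: `(f i, i)` is matched forward to the copy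
of `i + 1` other than `(f (i + 1), i + 1)`, and the other copy of `i` backward. Four choices
`f₀, …, f₃` partition the edges as soon as `k ↦ (f_k i, f_k (i + 1))` is a bijection onto `ℤ₂²`
for every `i`; this holds for `f_k i = φ_{c i} k`, where `φ₀, φ₁, φ₂` are the three nonzero linear
functionals on `𝔽₂²` and `c` is a proper 3-colouring of the cycle `C_m`. -/

theorem ZMod.two_eq_of_ne {a b c : ZMod 2} (ha : a ≠ c) (hb : b ≠ c) : a = b := by
  revert a b c; decide

theorem ZMod.exists_fin_three_coloring (m : ℕ) (hm : 2 ≤ m) :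
    ∃ c : ZMod m → Fin 3, ∀ i, c i ≠ c (i + 1) := by
  obtain ⟨n, rfl⟩ : ∃ n, m = n + 2 := ⟨m - 2, by omega⟩
  -- `ZMod (n + 2)` is definitionally `Fin (n + 2)`, the vertex type of `cycleGraph (n + 2)`.
  let c := cycleGraph.tricoloring (n + 2) hm
  exact ⟨c, fun i =>
    c.valid (cycleGraph_adj.mpr (Or.inr (add_sub_cancel_left (i : Fin (n + 2)) 1)))⟩

/-- Row `a` is the functional `φ_a` of `𝔽₂²`, with `k : Fin 4` read in binary as a vector. -/
def nonzeroFunctional : Fin 3 → Fin 4 → ZMod 2 :=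
  ![![0, 1, 0, 1], ![0, 0, 1, 1], ![0, 1, 1, 0]]

theorem bijective_nonzeroFunctional_pair :
    ∀ a b : Fin 3, a ≠ b →
      Function.Bijective fun k => (nonzeroFunctional a k, nonzeroFunctional b k) := by
  decide

namespace Cm2

variable {m : ℕ}

def matchingRel (f : ZMod m → ZMod 2) (u v : ZMod 2 × ZMod m) : Prop :=
  v.2 - u.2 = 1 ∧ u.1 = f u.2 ∧ v.1 ≠ f v.2

def matching (f : ZMod m → ZMod 2) : SimpleGraph (ZMod 2 × ZMod m) :=
  fromRel (matchingRel f)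

theorem matching_le (f : ZMod m → ZMod 2) : matching f ≤ Cm2 m := by
  intro u v h
  rw [matching, fromRel_adj] at h
  exact (fromRel_adj _ u v).mpr ⟨h.1, h.2.imp And.left And.left⟩

theorem neighborSet_matching_of_eq [Nontrivial (ZMod m)] (f : ZMod m → ZMod 2) {a : ZMod 2}
    {i : ZMod m} (ha : a = f i) :
    (matching f).neighborSet (a, i) = {(f (i + 1) + 1, i + 1)} := by
  ext ⟨b, j⟩
  simp only [mem_neighborSet, matching, matchingRel, fromRel_adj, Set.mem_singleton_iff,
    Prod.mk.injEq]
  constructor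
  · rintro ⟨-, ⟨hj, -, hb⟩ | ⟨-, -, hne⟩⟩
    · obtain rfl : j = i + 1 := by rw [← hj]; ring
      exact ⟨ZMod.two_eq_of_ne hb (by simp), rfl⟩
    · exact absurd ha hne
  · rintro ⟨rfl, rfl⟩
    exact ⟨by simp, Or.inl ⟨by ring, ha, by simp⟩⟩

theorem neighborSet_matching_of_ne [Nontrivial (ZMod m)] (f : ZMod m → ZMod 2) {a : ZMod 2}
    {i : ZMod m} (ha : a ≠ f i) :
    (matching f).neighborSet (a, i) = {(f (i - 1), i - 1)} := by
  ext ⟨b, j⟩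
  simp only [mem_neighborSet, matching, matchingRel, fromRel_adj, Set.mem_singleton_iff,
    Prod.mk.injEq]
  constructor
  · rintro ⟨-, ⟨-, heq, -⟩ | ⟨hj, hb, -⟩⟩
    · exact absurd heq ha
    · obtain rfl : j = i - 1 := by rw [← hj]; ring
      exact ⟨hb, rfl⟩
  · rintro ⟨rfl, rfl⟩
    exact ⟨by simp [eq_comm (a := i)], Or.inr ⟨by ring, rfl, ha⟩⟩

theorem isPM_matching [Nontrivial (ZMod m)] (f : ZMod m → ZMod 2) :
    IsPM (Cm2 m) (matching f) := by
  refine ⟨matching_le f, fun ⟨a, i⟩ => ?_⟩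
  by_cases ha : a = f i
  · rw [neighborSet_matching_of_eq f ha, Set.ncard_singleton]
  · rw [neighborSet_matching_of_ne f ha, Set.ncard_singleton]

section Factorization

variable {f : Fin 4 → ZMod m → ZMod 2}
  (hf : ∀ i, Function.Bijective fun k => (f k i, f k (i + 1)))
include hf

theorem eq_of_matchingRel {k j : Fin 4} {u v : ZMod 2 × ZMod m}
    (hk : matchingRel (f k) u v) (hj : matchingRel (f j) u v) : k = j := by
  obtain ⟨hv, hku, hkv⟩ := hk
  obtain ⟨-, hju, hjv⟩ := hj
  have hv' : v.2 = u.2 + 1 := by rw [← hv]; ring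
  rw [hv'] at hkv hjv
  exact (hf u.2).1 (Prod.ext (hku.symm.trans hju) (ZMod.two_eq_of_ne hkv.symm hjv.symm))

theorem exists_matchingRel {u v : ZMod 2 × ZMod m} (h : v.2 - u.2 = 1) :
    ∃ k, matchingRel (f k) u v := by
  obtain ⟨k, hk⟩ := (hf u.2).2 (u.1, v.1 + 1)
  obtain ⟨hku, hkv⟩ := Prod.mk.inj hk
  have hv : v.2 = u.2 + 1 := by rw [← h]; ring
  refine ⟨k, h, hku.symm, ?_⟩
  rw [hv, hkv]
  simp

theorem isDecompositionF_matching (h2 : (2 : ZMod m) ≠ 0) :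
    IsDecompositionF (Cm2 m) fun k => matching (f k) := by
  refine ⟨fun k => matching_le (f k), fun k j hkj => ?_, ?_⟩
  · ext u v
    simp only [inf_adj, bot_adj, iff_false, not_and, matching, fromRel_adj]
    rintro ⟨-, hk | hk⟩ - (hj | hj)
    · exact hkj (eq_of_matchingRel hf hk hj)
    · exact h2 (by linear_combination -hk.1 - hj.1)
    · exact h2 (by linear_combination -hk.1 - hj.1)
    · exact hkj (eq_of_matchingRel hf hk hj)
  · refine le_antisymm (iSup_le fun k => matching_le (f k)) fun u v huv => ?_
    rw [Cm2, fromRel_adj] at huv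
    obtain ⟨hne, h | h⟩ := huv
    · obtain ⟨k, hk⟩ := exists_matchingRel hf h
      exact iSup_adj.mpr ⟨k, (fromRel_adj _ u v).mpr ⟨hne, Or.inl hk⟩⟩
    · obtain ⟨k, hk⟩ := exists_matchingRel hf h
      exact iSup_adj.mpr ⟨k, (fromRel_adj _ u v).mpr ⟨hne, Or.inr hk⟩⟩

end Factorization

end Cm2

/-- For every `m ≥ 3`, `C_m[2]` has a 1-factorization into four perfect matchings. -/
theorem stmt_8 (m : ℕ) (hm : 3 ≤ m) :
    ∃ F : Fin 4 → SimpleGraph (ZMod 2 × ZMod m),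
      IsDecompositionF (Cm2 m) F ∧ ∀ i, IsPM (Cm2 m) (F i) := by
  have : Fact (1 < m) := ⟨by omega⟩
  have h2 : (2 : ZMod m) ≠ 0 := fun h =>
    absurd (Nat.le_of_dvd two_pos ((ZMod.natCast_eq_zero_iff 2 m).1 (by exact_mod_cast h)))
      (by omega)
  obtain ⟨c, hc⟩ := ZMod.exists_fin_three_coloring m (by omega)
  let f : Fin 4 → ZMod m → ZMod 2 := fun k i => nonzeroFunctional (c i) k
  have hf : ∀ i, Function.Bijective fun k => (f k i, f k (i + 1)) := fun i =>
    bijective_nonzeroFunctional_pair _ _ (hc i)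
  exact ⟨fun k => Cm2.matching (f k), Cm2.isDecompositionF_matching hf h2,
    fun k => Cm2.isPM_matching (f k)⟩
end
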